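/- arXiv:math-ph/0310004 — 3 statements merged into one kernel-verified Lean document; each statement's English description precedes it below -/
import Mathlib

section
/- With b = (p - i(ħ/(2α²))x - iħf(x))/√2 and b† = (p + i(ħ/(2α²))x + iħf(x))/√2, where p = -iħ d/dx and f(x) = -1/(x-α) - 1/(x+α), acting on smooth functions φ on ℝ \ {±α} one has b†b φ = (-ħ²/2)φ'' + (ħ²x²/(8α⁴))φ + Cφ for some explicit constant C, i.e., the singular terms involving f cancel in b†b. -/
open Complex

noncomputable section

/-- f(x) = -1/(x-α) - 1/(x+α). -/
def fSing (α x : ℝ) : ℝ := -1 / (x - α) - 1 / (x + α)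

/-- The annihilation-type operator b = (p - i(hb/(2α²))x - ihbf(x))/√2 acting on
functions, with p = -ihb d/dx. -/
def opb (α hb : ℝ) (φ : ℝ → ℂ) : ℝ → ℂ := fun x =>
  (1 / Real.sqrt 2 : ℂ) *
    (-I * hb * deriv φ x - I * (hb / (2 * α ^ 2)) * x * φ x
      - I * hb * fSing α x * φ x)

/-- The creation-type operator b† = (p + i(hb/(2α²))x + ihbf(x))/√2. -/
def opbdag (α hb : ℝ) (φ : ℝ → ℂ) : ℝ → ℂ := fun x =>
  (1 / Real.sqrt 2 : ℂ) *
    (-I * hb * deriv φ x + I * (hb / (2 * α ^ 2)) * x * φ x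
      + I * hb * fSing α x * φ x)

/-- Auxiliary algebraic identity. -/
lemma algAux (s X A H P0 P1 P2 : ℂ) (hs : s * s = 2) (hA : A ≠ 0)
    (hu0 : X - A ≠ 0) (hv0 : X + A ≠ 0) :
    1/s * (-I * H * (1/s *
        (-I * H * P2 - (I * (H / (2 * A ^ 2)) * P0 + I * (H / (2 * A ^ 2)) * X * P1)
          - (I * H * (((X - A)⁻¹)^2 + ((X + A)⁻¹)^2) * P0
              + I * H * (-(X - A)⁻¹ - (X + A)⁻¹) * P1)))
      + I * (H / (2 * A ^ 2)) * X * (1/s *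
        (-I * H * P1 - I * (H / (2 * A ^ 2)) * X * P0
          - I * H * (-(X - A)⁻¹ - (X + A)⁻¹) * P0))
      + I * H * (-(X - A)⁻¹ - (X + A)⁻¹) * (1/s *
        (-I * H * P1 - I * (H / (2 * A ^ 2)) * X * P0
          - I * H * (-(X - A)⁻¹ - (X + A)⁻¹) * P0))) =
    -(H ^ 2 / 2) * P2 + (H ^ 2 * X ^ 2 / (8 * A ^ 4)) * P0 + (-5 * H ^ 2 / (4 * A ^ 2)) * P0 := by
  have hu : (X - A) * (X - A)⁻¹ = 1 := mul_inv_cancel₀ hu0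
  have hv : (X + A) * (X + A)⁻¹ = 1 := mul_inv_cancel₀ hv0
  have ha : A * A⁻¹ = 1 := mul_inv_cancel₀ hA
  have hsum : (X - A)⁻¹ + (X + A)⁻¹ = 2 * X * ((X - A)⁻¹ * (X + A)⁻¹) := by
    linear_combination (-(X + A)⁻¹) * hu + (-(X - A)⁻¹) * hv
  have h2uv : (X ^ 2 - A ^ 2) * ((X - A)⁻¹ * (X + A)⁻¹) = 1 := by
    linear_combination ((X + A) * (X + A)⁻¹) * hu + hv
  have hw : (1/s) * (1/s) = 1/2 := by rw [div_mul_div_comm, one_mul, hs]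
  have hE : (1/(2*A^2) + ((X - A)⁻¹)^2 + ((X + A)⁻¹)^2)
      - (X/(2*A^2) + (-(X - A)⁻¹ - (X + A)⁻¹))^2
      = 5/(2*A^2) - X^2/(4*A^4) := by
    linear_combination (X * (A⁻¹)^2) * hsum + (2 * (A⁻¹)^2) * h2uv
      + (2 * ((X - A)⁻¹ * (X + A)⁻¹) * (A * A⁻¹ + 1)) * ha
  calc 1/s * (-I * H * (1/s *
        (-I * H * P2 - (I * (H / (2 * A ^ 2)) * P0 + I * (H / (2 * A ^ 2)) * X * P1)
          - (I * H * (((X - A)⁻¹)^2 + ((X + A)⁻¹)^2) * P0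
              + I * H * (-(X - A)⁻¹ - (X + A)⁻¹) * P1)))
      + I * (H / (2 * A ^ 2)) * X * (1/s *
        (-I * H * P1 - I * (H / (2 * A ^ 2)) * X * P0
          - I * H * (-(X - A)⁻¹ - (X + A)⁻¹) * P0))
      + I * H * (-(X - A)⁻¹ - (X + A)⁻¹) * (1/s *
        (-I * H * P1 - I * (H / (2 * A ^ 2)) * X * P0
          - I * H * (-(X - A)⁻¹ - (X + A)⁻¹) * P0)))
      = (1/s) * (1/s) * (I * I) * H^2 * (P2 +
          ((1/(2*A^2) + ((X - A)⁻¹)^2 + ((X + A)⁻¹)^2)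
            - (X/(2*A^2) + (-(X - A)⁻¹ - (X + A)⁻¹))^2) * P0) := by ring
    _ = -(H ^ 2 / 2) * P2 + (H ^ 2 * X ^ 2 / (8 * A ^ 4)) * P0
          + (-5 * H ^ 2 / (4 * A ^ 2)) * P0 := by
        rw [hw, Complex.I_mul_I]
        linear_combination (-(1/2 : ℂ) * H^2 * P0) * hE

set_option maxHeartbeats 1000000 in
/-- acting on smooth functions on ℝ \ {±α}, the singular terms
cancel in b†b: there is a constant C such that
b†b φ = (-hb²/2)φ'' + (hb²x²/(8α⁴))φ + Cφ on ℝ \ {±α}. -/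
theorem bdag_b_is_harmonic_oscillator
    (α hb : ℝ) (hα : 0 < α) (hhb : 0 < hb) :
    ∃ C : ℝ, ∀ φ : ℝ → ℂ, ContDiffOn ℝ 2 φ ({α, -α}ᶜ) →
      ∀ x : ℝ, x ≠ α → x ≠ -α →
        opbdag α hb (opb α hb φ) x =
          -(hb ^ 2 / 2) * deriv (deriv φ) x
            + (hb ^ 2 * x ^ 2 / (8 * α ^ 4)) * φ x + C * φ x := by
  refine ⟨-5 * hb ^ 2 / (4 * α ^ 2), ?_⟩
  intro φ hφ x hx1 hx2
  have hs : IsOpen (({α, -α} : Set ℝ)ᶜ) :=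
    ((Set.finite_singleton (-α)).insert α).isClosed.isOpen_compl
  have hxs : x ∈ ({α, -α} : Set ℝ)ᶜ := by simp [hx1, hx2]
  have hmem := hs.mem_nhds hxs
  have hxa : ((x : ℂ) - α) ≠ 0 := by
    simpa [sub_eq_zero] using fun h => hx1 (by exact_mod_cast h)
  have hxb : ((x : ℂ) + α) ≠ 0 := by
    intro h
    apply hx2
    have : (x : ℂ) = ((-α : ℝ) : ℂ) := by push_cast; linear_combination h
    exact_mod_cast this
  have hαc : (α : ℂ) ≠ 0 := by exact_mod_cast hα.ne'
  have hs2 : ((Real.sqrt 2 : ℝ) : ℂ) * ((Real.sqrt 2 : ℝ) : ℂ) = 2 := by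
    norm_cast
    exact Real.mul_self_sqrt (by norm_num)
  -- derivatives of φ
  have hφd : HasDerivAt φ (deriv φ x) x :=
    (((hφ.contDiffAt hmem).differentiableAt (by norm_num))).hasDerivAt
  have hφ' : ContDiffOn ℝ 1 (deriv φ) ({α, -α}ᶜ) :=
    hφ.deriv_of_isOpen hs (by norm_num)
  have hφdd : HasDerivAt (deriv φ) (deriv (deriv φ) x) x :=
    (((hφ'.contDiffAt hmem).differentiableAt (by norm_num))).hasDerivAt
  -- the singular function as a complex function
  set F : ℝ → ℂ := fun y => -(((y : ℂ) - α)⁻¹) - ((y : ℂ) + α)⁻¹ with hF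
  have hFy : ∀ y : ℝ, ((fSing α y : ℝ) : ℂ) = F y := by
    intro y; simp only [fSing, hF]; push_cast; ring
  have h1 : HasDerivAt (fun y : ℝ => (y : ℂ)) 1 x := by
    exact (hasDerivAt_id x).ofReal_comp
  have h2 : HasDerivAt (fun y : ℝ => ((y : ℂ) - α)⁻¹) (-1 / ((x : ℂ) - α) ^ 2) x := by
    have := (((hasDerivAt_id ((x : ℂ))).sub_const (α : ℂ)).inv hxa).comp_ofReal
    simpa using this
  have h3 : HasDerivAt (fun y : ℝ => ((y : ℂ) + α)⁻¹) (-1 / ((x : ℂ) + α) ^ 2) x := by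
    have := (((hasDerivAt_id ((x : ℂ))).add_const (α : ℂ)).inv hxb).comp_ofReal
    simpa using this
  have hFd : HasDerivAt F ((((x : ℂ) - α)⁻¹) ^ 2 + (((x : ℂ) + α)⁻¹) ^ 2) x := by
    have h := (h2.neg).sub h3
    convert h using 1
    · rfl
    · rfl
    rw [inv_pow, inv_pow]
    ring
  -- derivative of opb φ
  set c : ℂ := (1 / Real.sqrt 2 : ℂ) with hc
  have hopb : opb α hb φ = fun y =>
      c * (-I * hb * deriv φ y - I * (hb / (2 * α ^ 2)) * (y : ℂ) * φ y
        - (I * hb * F y) * φ y) := by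
    funext y
    simp only [opb, hFy, hc]
    try ring
  have key : HasDerivAt (opb α hb φ)
      (c * (-I * hb * deriv (deriv φ) x
        - (I * (hb / (2 * α ^ 2)) * φ x + I * (hb / (2 * α ^ 2)) * (x : ℂ) * deriv φ x)
        - ((I * hb * ((((x : ℂ) - α)⁻¹) ^ 2 + (((x : ℂ) + α)⁻¹) ^ 2)) * φ x
            + (I * hb * F x) * deriv φ x))) x := by
    rw [hopb]
    refine HasDerivAt.const_mul c ?_
    refine HasDerivAt.sub (HasDerivAt.sub ?_ ?_) ?_
    · exact hφdd.const_mul _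
    · have hy : HasDerivAt (fun y : ℝ => I * ((hb : ℂ) / (2 * α ^ 2)) * (y : ℂ))
          (I * ((hb : ℂ) / (2 * α ^ 2))) x := by
        simpa using h1.const_mul (I * ((hb : ℂ) / (2 * α ^ 2)))
      exact hy.mul hφd
    · exact (hFd.const_mul (I * (hb : ℂ))).mul hφd
  -- final algebra
  have halg := algAux ((Real.sqrt 2 : ℝ) : ℂ) (x : ℂ) (α : ℂ) (hb : ℂ)
    (φ x) (deriv φ x) (deriv (deriv φ) x) hs2 hαc hxa hxb
  simp only [opbdag]
  rw [key.deriv]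
  simp only [opb, hFy, hF, hc]
  push_cast
  linear_combination halg

end
end

section
/- Suppose a dressing chain relation holds: Hₙ = aₙaₙ† = aₙ₊₁†aₙ₊₁ + Cₙ for operators, and Q commutes with Hₙ(x) + H'(y) (operators acting on different factors of a tensor product / different variables). Then aₙ₊₁ Q aₙ₊₁† commutes with Hₙ₊₁(x) + H'(y), where Hₙ₊₁ = aₙ₊₁aₙ₊₁†. -/
/-- Dressing chains and integrals. Suppose Hₙ = a†a + C,
Hₙ₊₁ = aa† + C, Q commutes with Hₙ + H', and H' commutes with a and a†
(they act on different variables). Then a Q a† commutes with Hₙ₊₁ + H'. -/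
theorem dressing_chain_integral
    {K : Type*} [Field K] {V : Type*} [AddCommGroup V] [Module K V]
    (a adag Q H' : Module.End K V) (C : K)
    (Hn Hn1 : Module.End K V)
    (hHn : Hn = adag * a + C • (1 : Module.End K V))
    (hHn1 : Hn1 = a * adag + C • (1 : Module.End K V))
    (hQ : Commute Q (Hn + H'))
    (hH'a : Commute H' a) (hH'adag : Commute H' adag) :
    Commute (a * Q * adag) (Hn1 + H') := by
  subst hHn hHn1
  have hq : Q * (adag * a + C • (1 : Module.End K V) + H')
      = (adag * a + C • (1 : Module.End K V) + H') * Q := hQ.eq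
  have ha : H' * a = a * H' := hH'a.eq
  have had : H' * adag = adag * H' := hH'adag.eq
  show (a * Q * adag) * (a * adag + C • (1 : Module.End K V) + H')
      = (a * adag + C • (1 : Module.End K V) + H') * (a * Q * adag)
  calc (a * Q * adag) * (a * adag + C • (1 : Module.End K V) + H')
      = a * (Q * (adag * a + C • (1 : Module.End K V) + H')) * adag := by
        simp only [mul_add, add_mul, mul_smul_comm, smul_mul_assoc, mul_one, one_mul,
          mul_assoc]
        rw [had]
    _ = a * ((adag * a + C • (1 : Module.End K V) + H') * Q) * adag := by rw [hq]
    _ = (a * adag + C • (1 : Module.End K V) + H') * (a * Q * adag) := by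
        simp only [mul_add, add_mul, mul_smul_comm, smul_mul_assoc, mul_one, one_mul,
          mul_assoc]
        rw [← mul_assoc a H', ← ha, mul_assoc]
end

section
/- For the quantum radial oscillator with spectrum E_k^± = √(2a)·ħ·(2k + 1 ± ν), k ∈ ℕ, where ν = √(1 + 8b/ħ²)/2 and 0 < ν < 1 (i.e., -ħ²/8 < b < 3ħ²/8, b ≠ 0), the set of energy levels {E_k^±} is invariant under adding 2√(2a)ħ, but is not an arithmetic progression (not equidistant) when ν ≠ 1/2. -/
/-- For the radial-oscillator spectrum
S = {√(2a)ħ(2k+1±ν) : k ∈ ℕ} with ν ∈ (0,1), ν ≠ 1/2: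
(1) S is invariant under adding 2√(2a)ħ;
(2) S is not an arithmetic progression (not equidistant). -/
theorem radial_oscillator_spectrum_structure
    (a hb ν : ℝ) (ha : 0 < a) (hhb : 0 < hb)
    (hν0 : 0 < ν) (hν1 : ν < 1) (hνhalf : ν ≠ 1 / 2) :
    (∀ s ∈ ({s : ℝ | ∃ k : ℕ, s = Real.sqrt (2 * a) * hb * (2 * k + 1 + ν)} ∪
             {s : ℝ | ∃ k : ℕ, s = Real.sqrt (2 * a) * hb * (2 * k + 1 - ν)}),
        s + 2 * Real.sqrt (2 * a) * hb ∈
          ({s : ℝ | ∃ k : ℕ, s = Real.sqrt (2 * a) * hb * (2 * k + 1 + ν)} ∪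
           {s : ℝ | ∃ k : ℕ, s = Real.sqrt (2 * a) * hb * (2 * k + 1 - ν)})) ∧
    ¬ ∃ s₀ d : ℝ,
        ({s : ℝ | ∃ k : ℕ, s = Real.sqrt (2 * a) * hb * (2 * k + 1 + ν)} ∪
         {s : ℝ | ∃ k : ℕ, s = Real.sqrt (2 * a) * hb * (2 * k + 1 - ν)})
          = Set.range (fun n : ℕ => s₀ + n * d) := by
  have hs2 : 0 < Real.sqrt (2 * a) := Real.sqrt_pos.mpr (by linarith)
  set c := Real.sqrt (2 * a) * hb with hcdef
  have hc : 0 < c := mul_pos hs2 hhb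
  constructor
  · rintro s (⟨k, hk⟩ | ⟨k, hk⟩)
    · left; exact ⟨k + 1, by subst hk; push_cast; ring⟩
    · right; exact ⟨k + 1, by subst hk; push_cast; ring⟩
  · rintro ⟨s₀, d, hS⟩
    have hmem : ∀ x : ℝ,
        ((∃ k : ℕ, x = c * (2 * k + 1 + ν)) ∨ (∃ k : ℕ, x = c * (2 * k + 1 - ν))) ↔
        (∃ n : ℕ, s₀ + n * d = x) := by
      intro x
      have h := Set.ext_iff.mp hS x
      simpa [Set.mem_union, Set.mem_setOf_eq, Set.mem_range] using h
    -- lower bound: every element of S is ≥ c*(1-ν)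
    have hlb : ∀ x : ℝ,
        ((∃ k : ℕ, x = c * (2 * k + 1 + ν)) ∨ (∃ k : ℕ, x = c * (2 * k + 1 - ν))) →
        c * (1 - ν) ≤ x := by
      rintro x (⟨k, rfl⟩ | ⟨k, rfl⟩) <;>
        nlinarith [Nat.cast_nonneg (α := ℝ) k, hc, hν0, hν1]
    -- c(1-ν) and c(1+ν) are in the range
    obtain ⟨n₀, hn₀⟩ := (hmem (c * (1 - ν))).mp (Or.inr ⟨0, by push_cast; ring⟩)
    obtain ⟨n₁, hn₁⟩ := (hmem (c * (1 + ν))).mp (Or.inl ⟨0, by push_cast; ring⟩)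
    -- s₀ itself is in S
    have hs₀S := (hmem s₀).mpr ⟨0, by push_cast; ring⟩
    have hs₀lb : c * (1 - ν) ≤ s₀ := hlb s₀ hs₀S
    -- d > 0
    have hdpos : 0 < d := by
      by_contra hd
      push_neg at hd
      obtain ⟨K, hK⟩ := exists_nat_gt (s₀ / c)
      have hKc : s₀ < c * K := by
        rw [div_lt_iff₀ hc] at hK; linarith [mul_comm c (K : ℝ)]
      have hbig : c * (2 * (K : ℝ) + 1 + ν) > s₀ := by
        nlinarith [Nat.cast_nonneg (α := ℝ) K]
      obtain ⟨n, hn⟩ := (hmem (c * (2 * K + 1 + ν))).mp (Or.inl ⟨K, rfl⟩)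
      have : (n : ℝ) * d ≤ 0 := mul_nonpos_of_nonneg_of_nonpos (Nat.cast_nonneg n) hd
      linarith
    -- s₀ = c*(1-ν)
    have hn₀d : 0 ≤ (n₀ : ℝ) * d := mul_nonneg (Nat.cast_nonneg n₀) hdpos.le
    have hs₀ : s₀ = c * (1 - ν) := by linarith
    -- n₁ ≥ 1, hence d ≤ 2cν
    have hn₁d : (n₁ : ℝ) * d = 2 * c * ν := by linear_combination hn₁ - hs₀
    have hn₁pos : 1 ≤ n₁ := by
      rcases Nat.eq_zero_or_pos n₁ with h | h
      · exfalso; rw [h] at hn₁d; push_cast at hn₁d; nlinarith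
      · exact h
    have hdle : d ≤ 2 * c * ν := by
      have h1 : (1 : ℝ) ≤ (n₁ : ℝ) := by exact_mod_cast hn₁pos
      nlinarith
    -- s₀ + d ∈ S, so d = 2cν
    have hd1 : d = 2 * c * ν := by
      obtain (⟨k, hk⟩ | ⟨k, hk⟩) := (hmem (s₀ + d)).mpr ⟨1, by push_cast; ring⟩
      · have hdk : d = c * (2 * k + 2 * ν) := by linear_combination hk - hs₀
        have hk0 : (k : ℝ) ≤ 0 := by nlinarith
        have : (k : ℝ) = 0 := le_antisymm hk0 (Nat.cast_nonneg k)
        rw [hdk, this]; ring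
      · have hdk : d = c * (2 * k) := by linear_combination hk - hs₀
        have hkpos : 0 < (k : ℝ) := by
          rcases Nat.eq_zero_or_pos k with h | h
          · exfalso; rw [h] at hdk; push_cast at hdk; nlinarith
          · exact_mod_cast h
        have hk1 : (1 : ℝ) ≤ (k : ℝ) := by exact_mod_cast hkpos
        nlinarith
    -- s₀ + 2d = c(1+3ν) ∈ S leads to contradiction
    obtain (⟨k, hk⟩ | ⟨k, hk⟩) := (hmem (s₀ + 2 * d)).mpr ⟨2, by push_cast; ring⟩
    · -- 1 + 3ν = 2k + 1 + ν ⇒ ν = k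
      have hkν : (k : ℝ) = ν := by
        have hlin : c * ((k : ℝ) - ν) = 0 := by
          linear_combination (hs₀ + 2 * hd1 - hk) / 2
        rcases mul_eq_zero.mp hlin with h | h
        · exact absurd h hc.ne'
        · linarith
      rcases Nat.eq_zero_or_pos k with h | h
      · rw [h] at hkν; push_cast at hkν; linarith
      · have : (1 : ℝ) ≤ (k : ℝ) := by exact_mod_cast h
        linarith
    · -- 1 + 3ν = 2k + 1 - ν ⇒ k = 2ν, so k = 1 and ν = 1/2
      have hkν : (k : ℝ) = 2 * ν := by
        have hlin : c * ((k : ℝ) - 2 * ν) = 0 := by linear_combination (hs₀ + 2 * hd1 - hk) / 2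
        have := mul_eq_zero.mp hlin
        rcases this with h | h
        · exact absurd h hc.ne'
        · linarith
      have hk2 : (k : ℝ) < 2 := by linarith
      have hk0 : 0 < (k : ℝ) := by linarith
      have hk1 : k = 1 := by
        have h2 : k < 2 := by exact_mod_cast hk2
        have h0 : 0 < k := by exact_mod_cast hk0
        omega
      rw [hk1] at hkν; push_cast at hkν
      exact hνhalf (by linarith)
end
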